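/- arXiv:2207.11806 — 3 statements merged into one kernel-verified Lean document; each statement's English description precedes it below -/
import Mathlib

section
/- Let G be a topological group. For each positive integer n, let t_n denote the number of continuous homomorphisms from G to the symmetric group S_n (with the discrete topology), set t_0 = 1, and let s_k denote the number of continuous homomorphisms from G to S_k whose image is a transitive subgroup of S_k; assume all these sets are finite. Then for every positive integer n, t_n = Σ_{k=1}^{n} C(n−1, k−1) · s_k · t_{n−k}, where C(n−1, k−1) is the binomial coefficient. -/
/-- The number of continuous homomorphisms `G → S_n`, where the symmetric group `S_n`
carries the discrete topology. -/
noncomputable def contHomCount (G : Type*) [Group G] [TopologicalSpace G] (n : ℕ) : ℕ :=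
  Nat.card {φ : G →* Equiv.Perm (Fin n) // @Continuous G (Equiv.Perm (Fin n)) _ ⊥ ⇑φ}

/-- The number of continuous homomorphisms `G → S_n` with transitive image. -/
noncomputable def transContHomCount (G : Type*) [Group G] [TopologicalSpace G] (n : ℕ) : ℕ :=
  Nat.card {φ : G →* Equiv.Perm (Fin n) //
    @Continuous G (Equiv.Perm (Fin n)) _ ⊥ ⇑φ ∧ ∀ a b : Fin n, ∃ g : G, φ g a = b}

/-!
Sort a homomorphism `φ : G → S_n` by the orbit `O` of the point `0`. Since `φ` preserves `O` and
its complement, it is the same as a transitive homomorphism into `Perm O` together with an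
arbitrary one into the permutations of the complement; as both targets are discrete, `φ` is
continuous exactly when the two pieces are. There are `C(n-1, k-1)` choices of `O ∋ 0` with
`|O| = k`, which gives the recurrence.
-/

open Equiv Finset Function Topology

section DiscreteCodomain

variable {X A B : Type*} [TopologicalSpace X]

theorem continuous_bot_comp_iff {F : A → B} (hF : Injective F) {f : X → A} :
    Continuous[_, ⊥] (F ∘ f) ↔ Continuous[_, ⊥] f := by
  let _ : TopologicalSpace A := ⊥
  let _ : TopologicalSpace B := ⊥
  refine ⟨fun h => ?_, continuous_bot.comp⟩
  cases isEmpty_or_nonempty A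
  · exact continuous_empty_function f
  · have h' := (continuous_bot (f := invFun F)).comp h
    rwa [← comp_assoc, (leftInverse_invFun hF).comp_eq_id, id_comp] at h'

theorem continuous_bot_prodMk_iff {f : X → A} {g : X → B} :
    Continuous[_, ⊥] (fun x => (f x, g x)) ↔ Continuous[_, ⊥] f ∧ Continuous[_, ⊥] g := by
  let _ : TopologicalSpace A := ⊥
  let _ : TopologicalSpace B := ⊥
  have _ : DiscreteTopology A := ⟨rfl⟩
  have _ : DiscreteTopology B := ⟨rfl⟩
  rw [← (DiscreteTopology.eq_bot : (instTopologicalSpaceProd : TopologicalSpace (A × B)) = ⊥)]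
  exact continuous_prodMk

end DiscreteCodomain

section Splitting

variable {G α : Type*} [Group G] (p : α → Prop)

@[simps]
def MonoidHom.subtypePerm (φ : G →* Perm α) (h : ∀ g x, p (φ g x) ↔ p x) :
    G →* Perm {x // p x} where
  toFun g := (φ g).subtypePerm (h g)
  map_one' := by ext; simp
  map_mul' g h := by ext; simp only [map_mul]; rfl

variable [DecidablePred p]

def invariantHomEquiv :
    {φ : G →* Perm α // ∀ g x, p (φ g x) ↔ p x} ≃
      (G →* Perm {x // p x}) × (G →* Perm {x // ¬ p x}) where
  toFun φ := (φ.1.subtypePerm p φ.2, φ.1.subtypePerm (¬ p ·) fun g x => not_congr (φ.2 g x))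
  invFun ψχ := ⟨(Perm.subtypeCongrHom p).comp (ψχ.1.prod ψχ.2), fun g x => by
    by_cases hx : p x
    · simpa [Perm.subtypeCongr.left_apply _ _ hx, hx] using (ψχ.1 g ⟨x, hx⟩).2
    · simpa [Perm.subtypeCongr.right_apply _ _ hx, hx] using (ψχ.2 g ⟨x, hx⟩).2⟩
  left_inv φ := by
    ext g x
    by_cases hx : p x
    · simp [Perm.subtypeCongr.left_apply _ _ hx]
    · simp [Perm.subtypeCongr.right_apply _ _ hx]
  right_inv ψχ := by ext <;> simp

theorem transitive_invariantHomEquiv_symm_iff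
    (ψχ : (G →* Perm {x // p x}) × (G →* Perm {x // ¬ p x})) :
    (∀ x, p x → ∀ y, p y → ∃ g, ((invariantHomEquiv p).symm ψχ).1 g x = y) ↔
      ∀ x y : {x // p x}, ∃ g, ψχ.1 g x = y := by
  simp only [Subtype.forall, Subtype.ext_iff]
  refine forall₂_congr fun x hx => forall₂_congr fun y _ => exists_congr fun g => ?_
  exact Eq.congr_left (Perm.subtypeCongr.left_apply _ _ hx)

theorem continuous_bot_invariantHomEquiv_symm_iff [TopologicalSpace G]
    (ψχ : (G →* Perm {x // p x}) × (G →* Perm {x // ¬ p x})) :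
    Continuous[_, ⊥] ⇑((invariantHomEquiv p).symm ψχ).1 ↔
      Continuous[_, ⊥] ⇑ψχ.1 ∧ Continuous[_, ⊥] ⇑ψχ.2 :=
  (continuous_bot_comp_iff (Perm.subtypeCongrHom_injective p)).trans continuous_bot_prodMk_iff

end Splitting

section Transport

variable {G β γ : Type*} [Group G]

theorem transitive_permCongrHom_comp_iff (e : β ≃ γ) (φ : G →* Perm β) :
    (∀ x y, ∃ g, (e.permCongrHom.toMonoidHom.comp φ) g x = y) ↔ ∀ x y, ∃ g, φ g x = y := by
  simp only [MonoidHom.comp_apply, MulEquiv.coe_toMonoidHom, permCongrHom_coe, permCongr_apply]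
  refine ⟨fun h x y => ?_, fun h x y => ?_⟩
  · obtain ⟨g, hg⟩ := h (e x) (e y)
    exact ⟨g, by simpa using hg⟩
  · obtain ⟨g, hg⟩ := h (e.symm x) (e.symm y)
    exact ⟨g, by simp [hg]⟩

variable [TopologicalSpace G]

theorem continuous_bot_permCongrHom_comp_iff (e : β ≃ γ) (φ : G →* Perm β) :
    Continuous[_, ⊥] ⇑(e.permCongrHom.toMonoidHom.comp φ) ↔ Continuous[_, ⊥] ⇑φ :=
  continuous_bot_comp_iff (F := e.permCongrHom) (MulEquiv.injective _)

theorem card_contHom_eq_contHomCount [Fintype β] :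
    Nat.card {φ : G →* Perm β // Continuous[_, ⊥] ⇑φ} = contHomCount G (Fintype.card β) :=
  Nat.card_congr <|
    (MulEquiv.monoidHomCongrRightEquiv (Fintype.equivFin β).permCongrHom).subtypeEquiv
    fun φ => (continuous_bot_permCongrHom_comp_iff _ φ).symm

theorem card_transContHom_eq_transContHomCount [Fintype β] :
    Nat.card {φ : G →* Perm β // Continuous[_, ⊥] ⇑φ ∧ ∀ x y, ∃ g, φ g x = y} =
      transContHomCount G (Fintype.card β) :=
  Nat.card_congr <|
    (MulEquiv.monoidHomCongrRightEquiv (Fintype.equivFin β).permCongrHom).subtypeEquiv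
    fun φ => and_congr (continuous_bot_permCongrHom_comp_iff _ φ).symm
      (transitive_permCongrHom_comp_iff _ φ).symm

end Transport

section Orbit

variable {G α : Type*} [Group G] [Fintype α]

open scoped Classical in
noncomputable def permOrbit (φ : G →* Perm α) (a : α) : Finset α :=
  univ.filter fun b => ∃ g, φ g a = b

theorem mem_permOrbit {φ : G →* Perm α} {a b : α} : b ∈ permOrbit φ a ↔ ∃ g, φ g a = b := by
  simp [permOrbit]

theorem mem_permOrbit_self (φ : G →* Perm α) (a : α) : a ∈ permOrbit φ a :=
  mem_permOrbit.2 ⟨1, by simp⟩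

theorem permOrbit_eq_iff {φ : G →* Perm α} {a : α} {O : Finset α} (ha : a ∈ O) :
    permOrbit φ a = O ↔ (∀ g x, φ g x ∈ O ↔ x ∈ O) ∧ ∀ x ∈ O, ∀ y ∈ O, ∃ g, φ g x = y := by
  constructor
  · rintro rfl
    refine ⟨fun g x => ?_, fun x hx y hy => ?_⟩
    · simp only [mem_permOrbit]
      constructor
      · rintro ⟨h, hh⟩
        exact ⟨g⁻¹ * h, by simp [Perm.mul_apply, hh]⟩
      · rintro ⟨h, rfl⟩
        exact ⟨g * h, by simp [Perm.mul_apply]⟩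
    · obtain ⟨h, rfl⟩ := mem_permOrbit.1 hx
      obtain ⟨k, rfl⟩ := mem_permOrbit.1 hy
      exact ⟨k * h⁻¹, by simp [Perm.mul_apply]⟩
  · rintro ⟨hinv, htrans⟩
    ext b
    rw [mem_permOrbit]
    exact ⟨fun ⟨g, hg⟩ => hg ▸ (hinv g a).2 ha, htrans a ha b⟩

variable [DecidableEq α] [TopologicalSpace G]

def orbitFiberEquiv {a : α} {O : Finset α} (ha : a ∈ O) :
    {φ : G →* Perm α // Continuous[_, ⊥] ⇑φ ∧ permOrbit φ a = O} ≃
      {ψ : G →* Perm O // Continuous[_, ⊥] ⇑ψ ∧ ∀ x y, ∃ g, ψ g x = y} ×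
        {χ : G →* Perm {x // x ∉ O} // Continuous[_, ⊥] ⇑χ} :=
  (Equiv.subtypeEquivRight fun φ => by rw [permOrbit_eq_iff ha]; tauto).trans <|
    (Equiv.subtypeSubtypeEquivSubtypeInter (fun φ : G →* Perm α => ∀ g x, φ g x ∈ O ↔ x ∈ O)
      fun φ => Continuous[_, ⊥] ⇑φ ∧ ∀ x ∈ O, ∀ y ∈ O, ∃ g, φ g x = y).symm.trans <|
    ((invariantHomEquiv (· ∈ O)).symm.subtypeEquiv fun ψχ => by
      rw [continuous_bot_invariantHomEquiv_symm_iff, transitive_invariantHomEquiv_symm_iff]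
      tauto).symm.trans
    Equiv.subtypeProdEquivProd

theorem card_orbitFiber {a : α} {O : Finset α} (ha : a ∈ O) :
    Nat.card {φ : G →* Perm α // Continuous[_, ⊥] ⇑φ ∧ permOrbit φ a = O} =
      transContHomCount G O.card * contHomCount G (Fintype.card α - O.card) := by
  rw [Nat.card_congr (orbitFiberEquiv ha), Nat.card_prod, card_transContHom_eq_transContHomCount,
    card_contHom_eq_contHomCount, Fintype.card_coe, Fintype.card_subtype_compl, Fintype.card_coe]

end Orbit

theorem card_contHom_eq_sum_powerset {G α : Type*} [Group G] [TopologicalSpace G] [Fintype α]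
    [DecidableEq α] [Finite {φ : G →* Perm α // Continuous[_, ⊥] ⇑φ}] (a : α) :
    Nat.card {φ : G →* Perm α // Continuous[_, ⊥] ⇑φ} =
      ∑ t ∈ (univ.erase a).powerset,
        transContHomCount G (#t + 1) * contHomCount G (Fintype.card α - (#t + 1)) := by
  have hfibers : Nat.card {φ : G →* Perm α // Continuous[_, ⊥] ⇑φ} =
      ∑ O, Nat.card {φ : G →* Perm α // Continuous[_, ⊥] ⇑φ ∧ permOrbit φ a = O} := by
    rw [← Nat.card_congr (Equiv.sigmaFiberEquiv fun φ : {φ : G →* Perm α // _} => permOrbit φ.1 a),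
      Nat.card_sigma]
    exact sum_congr rfl fun O _ => Nat.card_congr <|
      Equiv.subtypeSubtypeEquivSubtypeInter (fun φ : G →* Perm α => Continuous[_, ⊥] ⇑φ)
        (permOrbit · a = O)
  have hempty (O : Finset α) (ha : a ∉ O) :
      Nat.card {φ : G →* Perm α // Continuous[_, ⊥] ⇑φ ∧ permOrbit φ a = O} = 0 :=
    Nat.card_eq_zero.2 <| .inl ⟨fun φ => ha (φ.2.2 ▸ mem_permOrbit_self φ.1 a)⟩
  have huniv : (univ : Finset (Finset α)) = (insert a (univ.erase a)).powerset := by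
    rw [insert_erase (mem_univ a), powerset_univ]
  have hnotMem {t : Finset α} (ht : t ∈ (univ.erase a).powerset) : a ∉ t :=
    fun h => (mem_erase.1 (mem_powerset.1 ht h)).1 rfl
  rw [hfibers, huniv, sum_powerset_insert (notMem_erase a univ),
    sum_eq_zero fun t ht => hempty t (hnotMem ht), zero_add]
  refine sum_congr rfl fun t ht => ?_
  rw [card_orbitFiber (mem_insert_self a t), card_insert_of_notMem (hnotMem ht)]

theorem contHomCount_recurrence_general (G : Type*) [Group G] [TopologicalSpace G]
    (hfin_t : ∀ n : ℕ,
      Finite {φ : G →* Equiv.Perm (Fin n) // @Continuous G (Equiv.Perm (Fin n)) _ ⊥ ⇑φ})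
    (n : ℕ) (hn : 0 < n) :
    contHomCount G n =
      ∑ k ∈ Finset.Icc 1 n,
        (n - 1).choose (k - 1) * transContHomCount G k * contHomCount G (n - k) := by
  have := hfin_t n
  calc contHomCount G n
      = Nat.card {φ : G →* Perm (Fin n) // Continuous[_, ⊥] ⇑φ} := by
        rw [card_contHom_eq_contHomCount, Fintype.card_fin]
    _ = ∑ t ∈ (univ.erase (⟨0, hn⟩ : Fin n)).powerset,
          transContHomCount G (#t + 1) * contHomCount G (n - (#t + 1)) := by
        rw [card_contHom_eq_sum_powerset, Fintype.card_fin]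
    _ = ∑ m ∈ range n,
          (n - 1).choose m * (transContHomCount G (m + 1) * contHomCount G (n - (m + 1))) := by
        rw [sum_powerset_apply_card
            (fun k => transContHomCount G (k + 1) * contHomCount G (n - (k + 1))),
          card_erase_of_mem (mem_univ _), card_univ, Fintype.card_fin, Nat.sub_add_cancel hn]
        rfl
    _ = _ := by
        rw [← Ico_add_one_right_eq_Icc, sum_Ico_eq_sum_range, Nat.add_sub_cancel]
        refine sum_congr rfl fun m _ => ?_
        rw [add_comm 1 m, Nat.add_sub_cancel, mul_assoc]

/-- `t_n = ∑_{k=1}^{n} C(n-1, k-1) · s_k · t_{n-k}` for every positive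
integer `n`, where `t_m` is the number of continuous homomorphisms `G → S_m`
(with `t_0 = 1`) and `s_k` the number of those with transitive image. -/
theorem contHomCount_recurrence (G : Type*) [Group G] [TopologicalSpace G]
    [IsTopologicalGroup G]
    (hfin_t : ∀ n : ℕ,
      Finite {φ : G →* Equiv.Perm (Fin n) // @Continuous G (Equiv.Perm (Fin n)) _ ⊥ ⇑φ})
    (hfin_s : ∀ n : ℕ, Finite {φ : G →* Equiv.Perm (Fin n) //
      @Continuous G (Equiv.Perm (Fin n)) _ ⊥ ⇑φ ∧ ∀ a b : Fin n, ∃ g : G, φ g a = b})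
    (n : ℕ) (hn : 0 < n) :
    contHomCount G n =
      ∑ k ∈ Finset.Icc 1 n,
        (n - 1).choose (k - 1) * transContHomCount G k * contHomCount G (n - k) :=
  contHomCount_recurrence_general G hfin_t n hn
end

section
/- Let G be a topological group. For each positive integer n, let t_n denote the number of continuous homomorphisms from G to the symmetric group S_n (with the discrete topology), set t_0 = 1, and let M_n denote the number of open subgroups of G of index n; assume all these sets are finite. Then for every positive integer n, t_n = (n−1)! · Σ_{k=1}^{n} t_{n−k} · M_k / (n−k)!. -/
/-- The number of open subgroups of `G` of index `n`. -/
noncomputable def openSubgroupCount (G : Type*) [Group G] [TopologicalSpace G] (n : ℕ) : ℕ :=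
  Nat.card {H : Subgroup G // IsOpen (H : Set G) ∧ H.index = n}

open Equiv Function Set Topology

section PointedEmbedding

variable {A X : Type*}

abbrev PointedEmbedding (a₀ : A) (x₀ : X) : Type _ := {j : A ↪ X // j a₀ = x₀}

def PointedEmbedding.equivEmbeddingNe [DecidableEq A] (a₀ : A) (x₀ : X) :
    PointedEmbedding a₀ x₀ ≃ ({a // a ≠ a₀} ↪ {x // x ≠ x₀}) where
  toFun j := j.1.subtypeMap fun a (ha : a ≠ a₀) => ne_of_ne_of_eq (j.1.injective.ne ha) j.2
  invFun f := by
    refine ⟨⟨fun a => if h : a = a₀ then x₀ else f ⟨a, h⟩, fun a b hab => ?_⟩, dif_pos rfl⟩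
    by_cases ha : a = a₀ <;> by_cases hb : b = a₀ <;>
      simp only [ha, hb, dite_true, dite_false] at hab
    · rw [ha, hb]
    · exact absurd hab.symm (f ⟨b, hb⟩).2
    · exact absurd hab (f ⟨a, ha⟩).2
    · simpa using f.injective (Subtype.ext hab)
  left_inv j := by
    refine Subtype.ext (Embedding.ext fun a => ?_)
    by_cases h : a = a₀
    · simp [h, j.2]
    · simp [h, Embedding.subtypeMap]
  right_inv f := by ext ⟨a, h⟩; exact dif_neg h

theorem PointedEmbedding.card [Finite A] [Finite X] (a₀ : A) (x₀ : X) :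
    Nat.card (PointedEmbedding a₀ x₀) = (Nat.card X - 1).descFactorial (Nat.card A - 1) := by
  classical
  have := Fintype.ofFinite A
  have := Fintype.ofFinite X
  rw [Nat.card_congr (equivEmbeddingNe a₀ x₀), Nat.card_eq_fintype_card,
    Fintype.card_embedding_eq]
  simp [Fintype.card_subtype_compl, Nat.card_eq_fintype_card]

end PointedEmbedding

section ContinuousPermHom

variable {G : Type*} [Group G] [TopologicalSpace G]

variable (G) in
abbrev ContPermHom (X : Type*) : Type _ := {φ : G →* Perm X // Continuous[_, ⊥] φ}

theorem continuous_bot_iff_isOpen_ker [IsTopologicalGroup G] {K : Type*} [Group K] (φ : G →* K) :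
    Continuous[_, ⊥] φ ↔ IsOpen (φ.ker : Set G) := by
  let : TopologicalSpace K := ⊥
  have : DiscreteTopology K := ⟨rfl⟩
  refine ⟨fun h => (isOpen_discrete {1}).preimage h, fun h => continuous_of_continuousAt_one φ ?_⟩
  rw [ContinuousAt, nhds_discrete K, map_one, Filter.tendsto_pure]
  exact h.mem_nhds (map_one φ)

theorem continuous_bot_of_ker_le [IsTopologicalGroup G] {K L : Type*} [Group K] [Group L]
    {φ : G →* K} {ψ : G →* L} (hφ : Continuous[_, ⊥] φ) (h : φ.ker ≤ ψ.ker) :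
    Continuous[_, ⊥] ψ :=
  (continuous_bot_iff_isOpen_ker ψ).2 <|
    Subgroup.isOpen_mono h ((continuous_bot_iff_isOpen_ker φ).1 hφ)

def ContPermHom.congr {X Y : Type*} (e : X ≃ Y) : ContPermHom G X ≃ ContPermHom G Y where
  toFun φ := ⟨e.permCongrHom.toMonoidHom.comp φ.1,
    @Continuous.comp _ _ _ _ ⊥ ⊥ φ.1 e.permCongrHom continuous_bot φ.2⟩
  invFun ψ := ⟨e.symm.permCongrHom.toMonoidHom.comp ψ.1,
    @Continuous.comp _ _ _ _ ⊥ ⊥ ψ.1 e.symm.permCongrHom continuous_bot ψ.2⟩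
  left_inv φ := by ext; simp
  right_inv ψ := by ext; simp

end ContinuousPermHom

section Stabilizer

variable {G X : Type*} [Group G]

def permStabilizer (φ : G →* Perm X) (x : X) : Subgroup G :=
  (MulAction.stabilizer (Perm X) x).comap φ

@[simp]
theorem mem_permStabilizer {φ : G →* Perm X} {x : X} {g : G} :
    g ∈ permStabilizer φ x ↔ φ g x = x :=
  MulAction.mem_stabilizer_iff

theorem ker_eq_iInf_permStabilizer (φ : G →* Perm X) : φ.ker = ⨅ x, permStabilizer φ x := by
  ext g
  simp [Perm.ext_iff]

theorem continuous_bot_iff_isOpen_permStabilizer [TopologicalSpace G] [IsTopologicalGroup G]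
    [Finite X] (φ : G →* Perm X) :
    Continuous[_, ⊥] φ ↔ ∀ x, IsOpen (permStabilizer φ x : Set G) := by
  rw [continuous_bot_iff_isOpen_ker, ker_eq_iInf_permStabilizer]
  refine ⟨fun h x => Subgroup.isOpen_mono (iInf_le _ x) h, fun h => ?_⟩
  rw [Subgroup.coe_iInf]
  exact isOpen_iInter_of_finite h

theorem isOpen_stabilizer_quotient [TopologicalSpace G] [IsTopologicalGroup G] {H : Subgroup G}
    (hH : IsOpen (H : Set G)) (q : G ⧸ H) : IsOpen (MulAction.stabilizer G q : Set G) := by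
  obtain ⟨a, rfl⟩ := QuotientGroup.mk_surjective q
  have : (MulAction.stabilizer G (a : G ⧸ H) : Set G) = (fun g => a⁻¹ * (g * a)) ⁻¹' H := by
    ext g
    simp [MulAction.mem_stabilizer_iff, eq_comm (a := ((g * a : G) : G ⧸ H)), QuotientGroup.eq]
  rw [this]
  exact hH.preimage (by fun_prop)

end Stabilizer

section Glue

variable {G X : Type*} [Group G] {H : Subgroup G}

open scoped Classical in
noncomputable def glueQuotientAction (j : G ⧸ H ↪ X) (ψ : G →* Perm ↥(range j)ᶜ) :
    G →* Perm X :=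
  (Perm.subtypeCongrHom (· ∈ range j)).comp
    (((ofInjective j j.injective).permCongrHom.toMonoidHom.comp
      (MulAction.toPermHom G (G ⧸ H))).prod ψ)

theorem glueQuotientAction_apply_embedding (j : G ⧸ H ↪ X) (ψ : G →* Perm ↥(range j)ᶜ)
    (g : G) (q : G ⧸ H) : glueQuotientAction j ψ g (j q) = j (g • q) := by
  classical
  simp [glueQuotientAction, Perm.subtypeCongr.left_apply _ _ (mem_range_self q)]

theorem glueQuotientAction_apply_of_notMem (j : G ⧸ H ↪ X) (ψ : G →* Perm ↥(range j)ᶜ)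
    (g : G) {x : X} (hx : x ∉ range j) : glueQuotientAction j ψ g x = ψ g ⟨x, hx⟩ := by
  classical
  simp [glueQuotientAction, Perm.subtypeCongr.right_apply _ _ hx]

theorem continuous_glueQuotientAction [TopologicalSpace G] [IsTopologicalGroup G] [Finite X]
    (hH : IsOpen (H : Set G)) (j : G ⧸ H ↪ X) {ψ : G →* Perm ↥(range j)ᶜ}
    (hψ : Continuous[_, ⊥] ψ) : Continuous[_, ⊥] (glueQuotientAction j ψ) := by
  rw [continuous_bot_iff_isOpen_permStabilizer] at hψ ⊢
  intro x
  by_cases hx : x ∈ range j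
  · obtain ⟨q, rfl⟩ := hx
    convert isOpen_stabilizer_quotient hH q using 1
    ext g
    simp [glueQuotientAction_apply_embedding]
  · convert hψ ⟨x, hx⟩ using 1
    ext g
    simp [glueQuotientAction_apply_of_notMem _ _ _ hx, Subtype.ext_iff]

theorem glueQuotientAction_apply_of_apply_one_eq {x₀ : X} (j : G ⧸ H ↪ X)
    (hj : j ((1 : G) : G ⧸ H) = x₀) (ψ : G →* Perm ↥(range j)ᶜ) (g : G) :
    glueQuotientAction j ψ g x₀ = j g := by
  subst hj
  rw [glueQuotientAction_apply_embedding, MulAction.Quotient.smul_mk, smul_eq_mul, mul_one]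

theorem mem_iff_glueQuotientAction_apply_eq {x₀ : X} (j : G ⧸ H ↪ X)
    (hj : j ((1 : G) : G ⧸ H) = x₀) (ψ : G →* Perm ↥(range j)ᶜ) (g : G) :
    g ∈ H ↔ glueQuotientAction j ψ g x₀ = x₀ := by
  rw [glueQuotientAction_apply_of_apply_one_eq j hj, ← hj, j.injective.eq_iff, QuotientGroup.eq]
  simp

end Glue

section Orbit

variable {G X : Type*} [Group G]

def orbitEmbedding (φ : G →* Perm X) (x₀ : X) : G ⧸ permStabilizer φ x₀ ↪ X where
  toFun := Quotient.lift (s := QuotientGroup.leftRel _) (fun g => φ g x₀) fun a b h => by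
    have := mem_permStabilizer.1 (QuotientGroup.leftRel_apply.1 h)
    simp only [map_mul, map_inv, Perm.mul_apply, Perm.inv_eq_iff_eq] at this
    exact this.symm
  inj' := by
    rintro ⟨a⟩ ⟨b⟩ (h : φ a x₀ = φ b x₀)
    refine QuotientGroup.eq.2 (mem_permStabilizer.2 ?_)
    simp [← h]

@[simp]
theorem orbitEmbedding_mk (φ : G →* Perm X) (x₀ : X) (g : G) :
    orbitEmbedding φ x₀ g = φ g x₀ :=
  rfl

theorem apply_mem_range_orbitEmbedding_iff (φ : G →* Perm X) (x₀ : X) (g : G) (x : X) :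
    φ g x ∈ range (orbitEmbedding φ x₀) ↔ x ∈ range (orbitEmbedding φ x₀) := by
  constructor
  · rintro ⟨q, hq⟩
    obtain ⟨a, rfl⟩ := QuotientGroup.mk_surjective q
    refine ⟨((g⁻¹ * a : G) : G ⧸ permStabilizer φ x₀), ?_⟩
    simp_all [Perm.mul_apply, ← Perm.eq_inv_iff_eq]
  · rintro ⟨q, rfl⟩
    obtain ⟨a, rfl⟩ := QuotientGroup.mk_surjective q
    exact ⟨((g * a : G) : G ⧸ permStabilizer φ x₀), by simp⟩

theorem index_permStabilizer_mem_Icc [Finite X] (φ : G →* Perm X) (x₀ : X) :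
    (permStabilizer φ x₀).index ∈ Finset.Icc 1 (Nat.card X) := by
  have := Finite.of_injective _ (orbitEmbedding φ x₀).injective
  exact Finset.mem_Icc.2
    ⟨Nat.card_pos, Nat.card_le_card_of_injective _ (orbitEmbedding φ x₀).injective⟩

def MonoidHom.restrictPerm (φ : G →* Perm X) (S : Set X) (hS : ∀ g x, φ g x ∈ S ↔ x ∈ S) :
    G →* Perm S where
  toFun g := (φ g).subtypePerm (hS g)
  map_one' := by ext; simp
  map_mul' _ _ := by ext; simp only [map_mul]; rfl

end Orbit

section Decomposition

variable {G X : Type*} [Group G] [TopologicalSpace G]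

variable (G) in
abbrev OpenSubgroupOfIndexAtMost (N : ℕ) : Type _ :=
  {H : Subgroup G // IsOpen (H : Set G) ∧ H.index ∈ Finset.Icc 1 N}

variable (G) in
abbrev OrbitDecomposition (x₀ : X) : Type _ :=
  Σ H : OpenSubgroupOfIndexAtMost G (Nat.card X),
    Σ j : PointedEmbedding ((1 : G) : G ⧸ H.1) x₀, ContPermHom G ↥(range j.1)ᶜ

variable [IsTopologicalGroup G] [Finite X] {x₀ : X}

def toOrbitDecomposition (x₀ : X) (φ : ContPermHom G X) : OrbitDecomposition G x₀ :=
  ⟨⟨permStabilizer φ.1 x₀, (continuous_bot_iff_isOpen_permStabilizer φ.1).1 φ.2 x₀,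
      index_permStabilizer_mem_Icc φ.1 x₀⟩,
    ⟨orbitEmbedding φ.1 x₀, by simp⟩,
    ⟨φ.1.restrictPerm _ fun g x => not_congr (apply_mem_range_orbitEmbedding_iff φ.1 x₀ g x),
      continuous_bot_of_ker_le φ.2 fun g hg => by ext; simp_all [MonoidHom.restrictPerm]⟩⟩

noncomputable def ofOrbitDecomposition (t : OrbitDecomposition G x₀) : ContPermHom G X :=
  ⟨glueQuotientAction t.2.1.1 t.2.2.1, continuous_glueQuotientAction t.1.2.1 _ t.2.2.2⟩

theorem ofOrbitDecomposition_toOrbitDecomposition (φ : ContPermHom G X) :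
    ofOrbitDecomposition (toOrbitDecomposition x₀ φ) = φ := by
  refine Subtype.ext (MonoidHom.ext fun g => Perm.ext fun x => ?_)
  by_cases hx : x ∈ range (orbitEmbedding φ.1 x₀)
  · obtain ⟨q, rfl⟩ := hx
    obtain ⟨a, rfl⟩ := QuotientGroup.mk_surjective q
    refine (glueQuotientAction_apply_embedding _ _ g _).trans ?_
    change orbitEmbedding φ.1 x₀ (g • (a : G ⧸ _)) = _
    rw [MulAction.Quotient.smul_mk, orbitEmbedding_mk, smul_eq_mul, map_mul, Perm.mul_apply,
      orbitEmbedding_mk]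
  · exact glueQuotientAction_apply_of_notMem _ _ g hx

theorem ofOrbitDecomposition_injective :
    Injective (ofOrbitDecomposition : OrbitDecomposition G x₀ → ContPermHom G X) := by
  rintro ⟨H, j, ψ⟩ ⟨H', j', ψ'⟩ h
  have happ : ∀ g x, glueQuotientAction j.1 ψ.1 g x = glueQuotientAction j'.1 ψ'.1 g x :=
    fun g x => congrArg (fun φ : ContPermHom G X => φ.1 g x) h
  obtain rfl : H = H' := Subtype.ext <| Subgroup.ext fun g => by
    rw [mem_iff_glueQuotientAction_apply_eq j.1 j.2 ψ.1,
      mem_iff_glueQuotientAction_apply_eq j'.1 j'.2 ψ'.1, happ]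
  obtain rfl : j = j' := Subtype.ext <| Embedding.ext fun q => by
    obtain ⟨a, rfl⟩ := QuotientGroup.mk_surjective q
    rw [← glueQuotientAction_apply_of_apply_one_eq j.1 j.2 ψ.1,
      ← glueQuotientAction_apply_of_apply_one_eq j'.1 j'.2 ψ'.1, happ]
  obtain rfl : ψ = ψ' := Subtype.ext <| MonoidHom.ext fun g => Perm.ext fun x => Subtype.ext <| by
    rw [← glueQuotientAction_apply_of_notMem _ _ _ x.2,
      ← glueQuotientAction_apply_of_notMem _ _ _ x.2, happ]
  rfl

variable (G) in
noncomputable def contPermHomEquivOrbitDecomposition (x₀ : X) :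
    ContPermHom G X ≃ OrbitDecomposition G x₀ :=
  (Equiv.ofBijective _ ⟨ofOrbitDecomposition_injective, fun φ =>
    ⟨toOrbitDecomposition x₀ φ, ofOrbitDecomposition_toOrbitDecomposition φ⟩⟩).symm

end Decomposition

section Counting

variable {G X : Type*} [Group G] [TopologicalSpace G]

theorem Function.Embedding.card_compl_range {A : Type*} [Finite X] (j : A ↪ X) :
    Nat.card ↥(range j)ᶜ = Nat.card X - Nat.card A := by
  rw [Nat.card_coe_set_eq, Set.ncard_compl, Set.ncard_range_of_injective j.injective]

theorem ContPermHom.finite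
    (hfin_t : ∀ n : ℕ, Finite (ContPermHom G (Fin n))) (X : Type*) [Finite X] :
    Finite (ContPermHom G X) :=
  Finite.of_equiv _ (ContPermHom.congr (Finite.equivFin X)).symm

theorem ContPermHom.card_eq_contHomCount (X : Type*) [Finite X] :
    Nat.card (ContPermHom G X) = contHomCount G (Nat.card X) :=
  Nat.card_congr (ContPermHom.congr (Finite.equivFin X))

theorem OpenSubgroupOfIndexAtMost.finite
    (hfin_M : ∀ n : ℕ, 0 < n → Finite {H : Subgroup G // IsOpen (H : Set G) ∧ H.index = n})
    (N : ℕ) : Finite (OpenSubgroupOfIndexAtMost G N) := by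
  have hunion : {H : Subgroup G | IsOpen (H : Set G) ∧ H.index ∈ Finset.Icc 1 N} =
      ⋃ k ∈ Finset.Icc 1 N, {H : Subgroup G | IsOpen (H : Set G) ∧ H.index = k} := by
    ext H
    simp
  refine Set.Finite.to_subtype (s := {H : Subgroup G | _}) ?_
  rw [hunion]
  refine Set.Finite.biUnion (Finset.finite_toSet _) fun k hk => ?_
  exact Set.finite_coe_iff.1 (hfin_M k (Finset.mem_Icc.1 hk).1)

theorem OpenSubgroupOfIndexAtMost.finite_quotient {N : ℕ} (H : OpenSubgroupOfIndexAtMost G N) :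
    Finite (G ⧸ H.1) :=
  Nat.finite_of_card_ne_zero (Nat.one_le_iff_ne_zero.1 (Finset.mem_Icc.1 H.2.2).1)

theorem OpenSubgroupOfIndexAtMost.sum_index_eq {N : ℕ} [Fintype (OpenSubgroupOfIndexAtMost G N)]
    (f : ℕ → ℕ) :
    ∑ H : OpenSubgroupOfIndexAtMost G N, f H.1.index =
      ∑ k ∈ Finset.Icc 1 N, openSubgroupCount G k * f k := by
  rw [← Finset.sum_fiberwise_of_maps_to (g := fun H : OpenSubgroupOfIndexAtMost G N => H.1.index)
    (t := Finset.Icc 1 N) fun H _ => H.2.2]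
  refine Finset.sum_congr rfl fun k hk => ?_
  rw [Finset.sum_congr rfl fun H hH => by rw [(Finset.mem_filter.1 hH).2], Finset.sum_const,
    smul_eq_mul, ← Fintype.card_subtype, ← Nat.card_eq_fintype_card]
  congr 1
  exact Nat.card_congr
    { toFun H := ⟨H.1.1, H.1.2.1, H.2⟩
      invFun H := ⟨⟨H.1, H.2.1, by rw [H.2.2]; exact hk⟩, H.2.2⟩ }

theorem card_contPermHom_eq_sum [IsTopologicalGroup G] [Finite X]
    (hfin_t : ∀ n : ℕ, Finite (ContPermHom G (Fin n)))
    (hfin_M : ∀ n : ℕ, 0 < n → Finite {H : Subgroup G // IsOpen (H : Set G) ∧ H.index = n})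
    (x₀ : X) :
    Nat.card (ContPermHom G X) = ∑ k ∈ Finset.Icc 1 (Nat.card X),
      (Nat.card X - 1).descFactorial (k - 1) * openSubgroupCount G k *
        contHomCount G (Nat.card X - k) := by
  have := OpenSubgroupOfIndexAtMost.finite hfin_M (Nat.card X)
  have := Fintype.ofFinite (OpenSubgroupOfIndexAtMost G (Nat.card X))
  have := ContPermHom.finite hfin_t
  have := OpenSubgroupOfIndexAtMost.finite_quotient (G := G) (N := Nat.card X)
  have hfiber (H : OpenSubgroupOfIndexAtMost G (Nat.card X)) :
      Nat.card (Σ j : PointedEmbedding ((1 : G) : G ⧸ H.1) x₀, ContPermHom G ↥(range j.1)ᶜ) =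
        (Nat.card X - 1).descFactorial (H.1.index - 1) *
          contHomCount G (Nat.card X - H.1.index) := by
    have := Fintype.ofFinite (PointedEmbedding ((1 : G) : G ⧸ H.1) x₀)
    rw [Nat.card_sigma]
    simp_rw [ContPermHom.card_eq_contHomCount, Embedding.card_compl_range]
    rw [Finset.sum_const, Finset.card_univ, ← Nat.card_eq_fintype_card, PointedEmbedding.card,
      smul_eq_mul]
    rfl
  rw [Nat.card_congr (contPermHomEquivOrbitDecomposition G x₀), Nat.card_sigma,
    Finset.sum_congr rfl fun H _ => hfiber H, OpenSubgroupOfIndexAtMost.sum_index_eq fun k =>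
    (Nat.card X - 1).descFactorial (k - 1) * contHomCount G (Nat.card X - k)]
  exact Finset.sum_congr rfl fun k _ => by ring

end Counting

/-- Wohlfahrt's recurrence.  For every positive integer `n`,
`t_n = (n-1)! · ∑_{k=1}^{n} t_{n-k} · M_k / (n-k)!`, where `t_m` is the number of
continuous homomorphisms `G → S_m` (with `t_0 = 1`) and `M_k` the number of open
subgroups of `G` of index `k`. -/
theorem wohlfahrt_recurrence (G : Type*) [Group G] [TopologicalSpace G]
    [IsTopologicalGroup G]
    (hfin_t : ∀ n : ℕ,
      Finite {φ : G →* Equiv.Perm (Fin n) // @Continuous G (Equiv.Perm (Fin n)) _ ⊥ ⇑φ})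
    (hfin_M : ∀ n : ℕ, 0 < n → Finite {H : Subgroup G // IsOpen (H : Set G) ∧ H.index = n})
    (n : ℕ) (hn : 0 < n) :
    (contHomCount G n : ℚ) =
      ((n - 1).factorial : ℚ) *
        ∑ k ∈ Finset.Icc 1 n,
          (contHomCount G (n - k) : ℚ) * (openSubgroupCount G k : ℚ) /
            ((n - k).factorial : ℚ) := by
  have hcount := card_contPermHom_eq_sum hfin_t hfin_M (⟨0, hn⟩ : Fin n)
  rw [Nat.card_fin] at hcount
  change contHomCount G n = _ at hcount
  rw [hcount, Nat.cast_sum, Finset.mul_sum]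
  refine Finset.sum_congr rfl fun k hk => ?_
  obtain ⟨hk1, hkn⟩ := Finset.mem_Icc.1 hk
  have hfac : ((n - k).factorial : ℚ) * (n - 1).descFactorial (k - 1) = (n - 1).factorial := by
    rw [← Nat.factorial_mul_descFactorial (by omega : k - 1 ≤ n - 1),
      show n - 1 - (k - 1) = n - k by omega]
    push_cast; ring
  field_simp
  push_cast
  linear_combination (openSubgroupCount G k : ℚ) * contHomCount G (n - k) * hfac
end

section
/- Let p be a prime. For each nonnegative integer n, let t_{p,n} denote the number of permutations in the symmetric group S_n whose order is a power of p (with t_{p,0} = 1). Then in the formal power series ring ℚ[[x]] one has exp( Σ_{n ≥ 0} x^{p^n} / p^n ) = Σ_{n ≥ 0} (t_{p,n} / n!) x^n; that is, the Artin–Hasse series E_p(x) is the exponential generating function of the numbers t_{p,n}. -/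
open scoped Classical

/-- The number of permutations in `S_n` whose order is a power of `p`. -/
noncomputable def pPowerOrderCount (p n : ℕ) : ℕ :=
  Nat.card {σ : Equiv.Perm (Fin n) // ∃ k : ℕ, orderOf σ = p ^ k}

/-- The formal exponential `exp` composed with a power series `A` (with zero constant
term): the `n`-th coefficient of `exp ∘ A` is `∑_{k=0}^{n} (coeff n of A^k) / k!`
(for `A` with zero constant term, `coeff n (A^k) = 0` when `k > n`). -/
noncomputable def expComp (A : PowerSeries ℚ) : PowerSeries ℚ :=
  PowerSeries.mk fun n =>
    ∑ k ∈ Finset.range (n + 1), (PowerSeries.coeff n (A ^ k)) / (k.factorial : ℚ)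

/-- The series `∑_{n ≥ 0} x^{p^n} / p^n ∈ ℚ[[x]]`: its coefficient at `m = p^n`
is `1/p^n = 1/m`, and all other coefficients vanish.  (Since `p` is prime, the
powers `p^n` are pairwise distinct and nonzero.) -/
noncomputable def artinHasseArg (p : ℕ) : PowerSeries ℚ :=
  PowerSeries.mk fun m => if ∃ n : ℕ, m = p ^ n then 1 / (m : ℚ) else 0

/-! Write a permutation `σ` of `N` points as `σ = c * ρ`, where `c = σ.cycleOf x` is the cycle
through a chosen point `x` and `ρ` fixes `x` and the support of `c`. Since `c` and `ρ` are
disjoint, `orderOf σ = lcm (orderOf c) (orderOf ρ)`, so for prime `p` the permutation `σ` has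
`p`-power order iff `c` has length `d = p^k` and `ρ` has `p`-power order; and there are
`(N - 1)! / (N - d)!` cycles of length `d` through `x`. Hence
`t (n + 1) / n! = ∑_{i + j = n, i + 1 = p^k} t j / j!`, i.e. the exponential generating function
`T` of `t` satisfies `T' = A' T` for `A = ∑ x^{p^k} / p^k`. As `(exp ∘ A)' = A' (exp ∘ A)` and
both series have constant term `1`, they coincide. -/

open Finset
open scoped Nat

theorem Nat.exists_eq_pow_of_dvd_pow {p a k : ℕ} (hp : p.Prime) (h : a ∣ p ^ k) :
    ∃ j, a = p ^ j := by
  obtain ⟨j, -, rfl⟩ := (Nat.dvd_prime_pow hp).mp h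
  exact ⟨j, rfl⟩

theorem Nat.exists_lcm_eq_pow_iff {p : ℕ} (hp : p.Prime) {a b : ℕ} :
    (∃ k, Nat.lcm a b = p ^ k) ↔ (∃ k, a = p ^ k) ∧ ∃ k, b = p ^ k := by
  constructor
  · rintro ⟨k, hk⟩
    exact ⟨Nat.exists_eq_pow_of_dvd_pow hp (hk ▸ Nat.dvd_lcm_left a b),
      Nat.exists_eq_pow_of_dvd_pow hp (hk ▸ Nat.dvd_lcm_right a b)⟩
  · rintro ⟨⟨i, rfl⟩, ⟨j, rfl⟩⟩
    rcases le_total i j with h | h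
    · exact ⟨j, Nat.lcm_eq_right (pow_dvd_pow p h)⟩
    · exact ⟨i, Nat.lcm_eq_left (pow_dvd_pow p h)⟩

namespace Equiv.Perm

theorem orderOf_ofSubtype {α : Type*} {q : α → Prop} [DecidablePred q] (g : Perm (Subtype q)) :
    orderOf (ofSubtype g) = orderOf g :=
  orderOf_injective ofSubtype ofSubtype_injective g

theorem exists_orderOf_mul_eq_pow_iff {α : Type*} {p : ℕ} (hp : p.Prime) {c ρ : Perm α}
    (h : Disjoint c ρ) :
    (∃ k, orderOf (c * ρ) = p ^ k) ↔
      (∃ k, orderOf c = p ^ k) ∧ ∃ k, orderOf ρ = p ^ k := by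
  rw [h.orderOf, Nat.exists_lcm_eq_pow_iff hp]

theorem card_pPowerOrder_eq_pPowerOrderCount (β : Type*) [Fintype β] (p : ℕ) :
    Nat.card {σ : Perm β // ∃ k, orderOf σ = p ^ k} = pPowerOrderCount p (Fintype.card β) :=
  Nat.card_congr <| (Fintype.equivFin β).permCongrHom.toEquiv.subtypeEquiv fun σ => by
    rw [← MulEquiv.orderOf_eq (Fintype.equivFin β).permCongrHom σ]
    rfl

variable {α : Type*} [DecidableEq α]

theorem card_fixing_eq_card_perm_compl (s : Finset α) (Q : Perm α → Prop) :
    Nat.card {f : Perm α // Q f ∧ ∀ a ∈ s, f a = a} =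
      Nat.card {g : Perm {a // a ∉ s} // Q (ofSubtype g)} := by
  refine Nat.card_congr (((Perm.subtypeEquivSubtypePerm _).subtypeEquiv fun _ => Iff.rfl).trans
    ((Equiv.subtypeSubtypeEquivSubtypeInter _ Q).trans (Equiv.subtypeEquivRight fun f => ?_))).symm
  simp [and_comm]

variable [Fintype α]

theorem card_pPowerOrder_fixing (p : ℕ) (s : Finset α) :
    Nat.card {f : Perm α // (∃ k, orderOf f = p ^ k) ∧ ∀ a ∈ s, f a = a} =
      pPowerOrderCount p (Fintype.card α - #s) := by
  rw [card_fixing_eq_card_perm_compl]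
  simp only [orderOf_ofSubtype]
  rw [card_pPowerOrder_eq_pPowerOrderCount, Fintype.card_subtype_compl, Fintype.card_coe]

-- Cycles through `x` are encoded as permutations `c` with `c.cycleOf x = c`; this includes
-- `c = 1`, which stands for `x` being a fixed point.
theorem cycleOf_cycleOf (σ : Perm α) (x : α) : (σ.cycleOf x).cycleOf x = σ.cycleOf x := by
  by_cases hx : σ x = x
  · rw [(cycleOf_eq_one_iff σ).mpr hx, cycleOf_one]
  · exact (isCycle_cycleOf σ hx).cycleOf_eq (by rwa [cycleOf_apply_self])

theorem card_insert_support_of_cycleOf_eq {c : Perm α} {x : α} (hc : c.cycleOf x = c) :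
    #(insert x c.support) = orderOf c := by
  by_cases hx : c x = x
  · rw [← hc, (cycleOf_eq_one_iff c).mpr hx]
    simp
  · have hcyc : c.IsCycle := hc ▸ isCycle_cycleOf c hx
    rw [insert_eq_of_mem (mem_support.mpr hx), hcyc.orderOf]

theorem inv_mul_apply_eq_self_of_cycleOf_eq {σ c : Perm α} {x : α} (h : σ.cycleOf x = c) :
    ∀ a ∈ insert x c.support, (c⁻¹ * σ) a = a := by
  intro a ha
  have hsame : σ.SameCycle x a := by
    rcases mem_insert.mp ha with rfl | ha
    · exact SameCycle.refl σ a
    · exact (mem_support_cycleOf_iff.mp (h ▸ ha)).1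
  rw [mul_apply, inv_eq_iff_eq, ← h, hsame.cycleOf_apply]

theorem disjoint_of_apply_eq_self {c ρ : Perm α} (h : ∀ a ∈ c.support, ρ a = a) :
    Disjoint c ρ := fun a => by
  by_cases ha : a ∈ c.support
  · exact Or.inr (h a ha)
  · exact Or.inl (notMem_support.mp ha)

theorem cycleOf_mul_of_apply_eq_self {c ρ : Perm α} {x : α} (hc : c.cycleOf x = c)
    (hρ : ∀ a ∈ insert x c.support, ρ a = a) : (c * ρ).cycleOf x = c := by
  rw [(disjoint_of_apply_eq_self fun a ha => hρ a (mem_insert_of_mem ha)).cycleOf_mul_distrib,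
    (cycleOf_eq_one_iff ρ).mpr (hρ x (mem_insert_self x _)), mul_one, hc]

theorem card_cycleType_eq_singleton {d : ℕ} (hd : 2 ≤ d) :
    #{g : Perm α | g.cycleType = {d}} = (d - 1)! * (Fintype.card α).choose d := by
  by_cases h : d ≤ Fintype.card α
  · exact card_of_cycleType_singleton hd h
  · rw [Nat.choose_eq_zero_of_lt (not_le.mp h), mul_zero, card_of_cycleType_eq_zero_iff]
    simp only [Multiset.sum_singleton, Multiset.mem_singleton, forall_eq]
    omega

theorem cycleOf_eq_self_and_orderOf_eq_iff {c : Perm α} {x : α} {d : ℕ} (hd : 2 ≤ d) :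
    c.cycleOf x = c ∧ orderOf c = d ↔ c.cycleType = {d} ∧ c x ≠ x := by
  constructor
  · rintro ⟨hc, rfl⟩
    have hx : c x ≠ x := fun hx => by
      rw [← hc, (cycleOf_eq_one_iff c).mpr hx, orderOf_one] at hd
      omega
    have hcyc : c.IsCycle := hc ▸ isCycle_cycleOf c hx
    exact ⟨by rw [hcyc.cycleType, hcyc.orderOf], hx⟩
  · rintro ⟨hc, hx⟩
    have hcyc : c.IsCycle := card_cycleType_eq_one.mp (by simp [hc])
    rw [hcyc.cycleType, Multiset.singleton_inj] at hc
    exact ⟨hcyc.cycleOf_eq hx, hcyc.orderOf.trans hc⟩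

-- The `(i + 1)`-cycles through `x` are counted as all `(i + 1)`-cycles of `α` minus those of
-- the complement of `x`, which gives `i! * (C(N, i + 1) - C(N - 1, i + 1)) = i! * C(N - 1, i)`.
theorem card_cycleOf_eq_self_orderOf_eq (x : α) (i : ℕ) :
    #{c : Perm α | c.cycleOf x = c ∧ orderOf c = i + 1} =
      (Fintype.card α - 1).descFactorial i := by
  rcases Nat.eq_zero_or_pos i with rfl | hi
  · rw [Nat.descFactorial_zero, card_eq_one]
    refine ⟨1, eq_singleton_iff_unique_mem.mpr ⟨by simp, fun c hc => ?_⟩⟩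
    exact orderOf_eq_one_iff.mp (mem_filter.mp hc).2.2
  have hd : 2 ≤ i + 1 := by omega
  have hmoving : ({c | c.cycleOf x = c ∧ orderOf c = i + 1} : Finset (Perm α)) =
      ({g ∈ ({g | g.cycleType = {i + 1}} : Finset (Perm α)) | g x ≠ x}) := by
    ext c
    simp [cycleOf_eq_self_and_orderOf_eq_iff hd]
  have hfixing : #{g ∈ {g : Perm α | g.cycleType = {i + 1}} | ¬g x ≠ x} =
      #{g : Perm {a // a ∉ ({x} : Finset α)} | g.cycleType = {i + 1}} := by
    rw [filter_filter, ← Fintype.card_subtype, ← Fintype.card_subtype,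
      ← Nat.card_eq_fintype_card, ← Nat.card_eq_fintype_card]
    simp_rw [← cycleType_ofSubtype (p := (· ∉ ({x} : Finset α)))]
    convert card_fixing_eq_card_perm_compl {x} (fun g : Perm α => g.cycleType = {i + 1}) using 3
    simp
  have hsplit := card_filter_add_card_filter_not (s := {g : Perm α | g.cycleType = {i + 1}})
    (fun g => g x ≠ x)
  obtain ⟨N, hN⟩ : ∃ N, Fintype.card α = N + 1 :=
    Nat.exists_eq_succ_of_ne_zero (Fintype.card_pos_iff.mpr ⟨x⟩).ne'
  rw [hfixing, card_cycleType_eq_singleton hd, card_cycleType_eq_singleton hd,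
    Fintype.card_subtype_compl, Fintype.card_coe, card_singleton, hN, Nat.add_sub_cancel,
    Nat.add_sub_cancel, Nat.choose_succ_succ', mul_add, Nat.add_right_cancel_iff] at hsplit
  rw [hmoving, hsplit, hN, Nat.add_sub_cancel, Nat.descFactorial_eq_factorial_mul_choose]

def cycleOfFiberEquiv {p : ℕ} (hp : p.Prime) {c : Perm α} {x : α} (hc : c.cycleOf x = c)
    (hcp : ∃ k, orderOf c = p ^ k) :
    {σ : Perm α // (∃ k, orderOf σ = p ^ k) ∧ σ.cycleOf x = c} ≃
      {ρ : Perm α // (∃ k, orderOf ρ = p ^ k) ∧ ∀ a ∈ insert x c.support, ρ a = a} where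
  toFun σ := ⟨c⁻¹ * σ, by
    have hfix := inv_mul_apply_eq_self_of_cycleOf_eq σ.2.2
    have hd := disjoint_of_apply_eq_self fun a ha => hfix a (mem_insert_of_mem ha)
    refine ⟨((exists_orderOf_mul_eq_pow_iff hp hd).mp ?_).2, hfix⟩
    rw [mul_inv_cancel_left]
    exact σ.2.1⟩
  invFun ρ := ⟨c * ρ,
    (exists_orderOf_mul_eq_pow_iff hp <|
      disjoint_of_apply_eq_self fun a ha => ρ.2.2 a (mem_insert_of_mem ha)).mpr ⟨hcp, ρ.2.1⟩,
    cycleOf_mul_of_apply_eq_self hc ρ.2.2⟩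
  left_inv σ := Subtype.ext (mul_inv_cancel_left c σ)
  right_inv ρ := Subtype.ext (inv_mul_cancel_left c ρ)

theorem card_pPowerOrder_cycleOf_eq {p : ℕ} (hp : p.Prime) {c : Perm α} {x : α}
    (hc : c.cycleOf x = c) :
    Nat.card {σ : Perm α // (∃ k, orderOf σ = p ^ k) ∧ σ.cycleOf x = c} =
      if ∃ k, orderOf c = p ^ k then pPowerOrderCount p (Fintype.card α - orderOf c) else 0 := by
  split_ifs with hcp
  · rw [Nat.card_congr (cycleOfFiberEquiv hp hc hcp), card_pPowerOrder_fixing,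
      card_insert_support_of_cycleOf_eq hc]
  · refine Nat.card_eq_zero.mpr (Or.inl ⟨fun ⟨σ, ⟨k, hσ⟩, hσc⟩ => hcp ?_⟩)
    exact Nat.exists_eq_pow_of_dvd_pow hp (hσc ▸ hσ ▸ orderOf_cycleOf_dvd_orderOf σ x)

theorem pPowerOrderCount_card_eq_sum {p : ℕ} (hp : p.Prime) (x : α) :
    pPowerOrderCount p (Fintype.card α) = ∑ i ∈ range (Fintype.card α),
      (Fintype.card α - 1).descFactorial i *
        if ∃ k, i + 1 = p ^ k then pPowerOrderCount p (Fintype.card α - 1 - i) else 0 := by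
  set N := Fintype.card α
  have hfibers : pPowerOrderCount p N = ∑ c ∈ ({c | c.cycleOf x = c} : Finset (Perm α)),
      if ∃ k, orderOf c = p ^ k then pPowerOrderCount p (N - orderOf c) else 0 := by
    rw [← card_pPowerOrder_eq_pPowerOrderCount, Nat.card_eq_fintype_card, Fintype.card_subtype,
      card_eq_sum_card_fiberwise (f := fun σ => σ.cycleOf x) (t := {c | c.cycleOf x = c})
        fun σ _ => by simp [cycleOf_cycleOf]]
    refine sum_congr rfl fun c hc => ?_
    rw [filter_filter, ← Fintype.card_subtype, ← Nat.card_eq_fintype_card,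
      card_pPowerOrder_cycleOf_eq hp (mem_filter.mp hc).2]
  have hmaps : ∀ c ∈ ({c | c.cycleOf x = c} : Finset (Perm α)), orderOf c - 1 ∈ range N := by
    intro c hc
    have := card_insert_support_of_cycleOf_eq (mem_filter.mp hc).2
    have := card_le_univ (insert x c.support)
    have := orderOf_pos c
    rw [mem_range]
    omega
  rw [hfibers, ← sum_fiberwise_of_maps_to hmaps]
  refine sum_congr rfl fun i _ => ?_
  have hcycles : ({c ∈ ({c | c.cycleOf x = c} : Finset (Perm α)) | orderOf c - 1 = i}) =
      ({c | c.cycleOf x = c ∧ orderOf c = i + 1} : Finset (Perm α)) := by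
    ext c
    have := orderOf_pos c
    simp only [mem_filter, mem_univ, true_and]
    exact and_congr_right fun _ => by omega
  rw [hcycles, ← card_cycleOf_eq_self_orderOf_eq x i, ← smul_eq_mul, ← sum_const]
  refine sum_congr rfl fun c hc => ?_
  rw [(mem_filter.mp hc).2.2, Nat.sub_add_eq, Nat.sub_right_comm]

end Equiv.Perm

open PowerSeries

namespace PowerSeries

theorem eq_of_derivative_eq_mul {R : Type*} [CommRing R] [IsAddTorsionFree R] {B F G : R⟦X⟧}
    (hF : d⁄dX R F = B * F) (hG : d⁄dX R G = B * G) (h0 : constantCoeff F = constantCoeff G) :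
    F = G := by
  ext n
  induction n using Nat.strong_induction_on with
  | _ n ih =>
    cases n with
    | zero => simpa using h0
    | succ n =>
      have h : coeff n (d⁄dX R F) = coeff n (d⁄dX R G) := by
        rw [hF, hG, coeff_mul, coeff_mul]
        refine sum_congr rfl fun ij hij => ?_
        rw [ih ij.2 (Nat.antidiagonal.snd_lt hij)]
      rw [coeff_derivative, coeff_derivative, ← Nat.cast_succ, mul_comm, ← nsmul_eq_mul,
        mul_comm, ← nsmul_eq_mul] at h
      exact (smul_right_inj n.succ_ne_zero).mp h

theorem coeff_pow_eq_zero_of_lt {R : Type*} [CommSemiring R] {A : R⟦X⟧}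
    (hA : constantCoeff A = 0) {n k : ℕ} (h : n < k) : coeff n (A ^ k) = 0 :=
  X_pow_dvd_iff.mp (pow_dvd_pow_of_dvd (X_dvd_iff.mpr hA) k) n h

end PowerSeries

theorem expComp_eq_subst_exp {A : ℚ⟦X⟧} (hA : constantCoeff A = 0) :
    expComp A = (exp ℚ).subst A := by
  ext n
  rw [coeff_subst' (HasSubst.of_constantCoeff_zero' hA),
    finsum_eq_sum_of_support_subset (s := range (n + 1)), expComp, coeff_mk]
  · refine sum_congr rfl fun k _ => ?_
    rw [coeff_exp, smul_eq_mul, Algebra.algebraMap_self, RingHom.id_apply]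
    ring
  · intro k hk
    by_contra hkn
    exact hk (by simp only [coeff_pow_eq_zero_of_lt hA (by simpa using hkn), smul_zero])

theorem derivative_expComp {A : ℚ⟦X⟧} (hA : constantCoeff A = 0) :
    d⁄dX ℚ (expComp A) = d⁄dX ℚ A * expComp A := by
  rw [expComp_eq_subst_exp hA, derivative_subst (HasSubst.of_constantCoeff_zero' hA),
    derivative_exp, mul_comm]

theorem constantCoeff_expComp (A : ℚ⟦X⟧) : constantCoeff (expComp A) = 1 := by
  rw [← coeff_zero_eq_constantCoeff_apply, expComp, coeff_mk]
  simp

theorem constantCoeff_artinHasseArg (p : ℕ) : constantCoeff (artinHasseArg p) = 0 := by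
  rw [← coeff_zero_eq_constantCoeff_apply, artinHasseArg, coeff_mk]
  simp

theorem derivative_artinHasseArg (p : ℕ) :
    d⁄dX ℚ (artinHasseArg p) = mk fun i => if ∃ k, i + 1 = p ^ k then 1 else 0 := by
  ext i
  rw [coeff_derivative, artinHasseArg, coeff_mk, coeff_mk]
  split_ifs
  · push_cast
    field_simp
  · rw [zero_mul]

theorem derivative_egf_of_recurrence {a t : ℕ → ℚ}
    (h : ∀ n, t (n + 1) = ∑ i ∈ range (n + 1), n.descFactorial i * (a i * t (n - i))) :
    d⁄dX ℚ (mk fun n => t n / n !) = mk a * mk fun n => t n / n ! := by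
  ext n
  rw [coeff_derivative, coeff_mul, Nat.sum_antidiagonal_eq_sum_range_succ_mk, coeff_mk, h,
    Nat.factorial_succ]
  simp only [coeff_mk]
  rw [sum_div, sum_mul]
  refine sum_congr rfl fun i hi => ?_
  have hi : i ≤ n := Nat.lt_succ_iff.mp (mem_range.mp hi)
  rw [← Nat.factorial_mul_descFactorial hi]
  have hfac : ((n - i)! : ℚ) ≠ 0 := by positivity
  have hdesc : (n.descFactorial i : ℚ) ≠ 0 := by
    exact_mod_cast mt Nat.descFactorial_eq_zero_iff_lt.mp (not_lt.mpr hi)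
  push_cast
  field_simp

theorem pPowerOrderCount_zero (p : ℕ) : pPowerOrderCount p 0 = 1 := by
  rw [pPowerOrderCount, Nat.card_eq_one_iff_unique]
  exact ⟨inferInstance, ⟨1, 0, by simp⟩⟩

theorem pPowerOrderCount_succ {p : ℕ} (hp : p.Prime) (n : ℕ) :
    pPowerOrderCount p (n + 1) = ∑ i ∈ range (n + 1),
      n.descFactorial i * if ∃ k, i + 1 = p ^ k then pPowerOrderCount p (n - i) else 0 := by
  simpa using Equiv.Perm.pPowerOrderCount_card_eq_sum hp (0 : Fin (n + 1))

/-- The Artin–Hasse series `E_p(x) = exp (∑_{n ≥ 0} x^{p^n}/p^n)`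
is the exponential generating function of the numbers `t_{p,n}` of permutations in
`S_n` of `p`-power order:  `E_p(x) = ∑_{n ≥ 0} (t_{p,n}/n!) x^n` in `ℚ[[x]]`. -/
theorem artinHasse_egf (p : ℕ) (hp : p.Prime) :
    expComp (artinHasseArg p) =
      PowerSeries.mk fun n => (pPowerOrderCount p n : ℚ) / (n.factorial : ℚ) := by
  refine eq_of_derivative_eq_mul (derivative_expComp (constantCoeff_artinHasseArg p)) ?_ ?_
  · rw [derivative_artinHasseArg]
    refine derivative_egf_of_recurrence fun n => ?_
    rw [pPowerOrderCount_succ hp]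
    push_cast
    refine sum_congr rfl fun i _ => ?_
    split_ifs <;> simp
  · rw [constantCoeff_expComp, ← coeff_zero_eq_constantCoeff_apply, coeff_mk,
      pPowerOrderCount_zero]
    simp
end
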